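/- arXiv:2007.13132 — 5 statements merged into one kernel-verified Lean document; each statement's English description precedes it below -/
import Mathlib

section
/- For any finite simple digraph D of order n, the Italian domination number of D satisfies γ_I(D) ≥ ⌈2n / (2 + Δ⁺(D))⌉, where Δ⁺(D) is the maximum out-degree of D. -/
/-- An Italian dominating function on a digraph given by adjacency relation `adj`:
`f : V → {0,1,2}` such that every vertex with value 0 has an in-neighbor with value 2
or two distinct in-neighbors with value 1. -/
def IsIDF {V : Type*} (adj : V → V → Prop) (f : V → ℕ) : Prop :=
  (∀ v, f v ≤ 2) ∧ ∀ v, f v = 0 →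
    (∃ w, adj w v ∧ f w = 2) ∨
    (∃ w₁ w₂, w₁ ≠ w₂ ∧ adj w₁ v ∧ adj w₂ v ∧ f w₁ = 1 ∧ f w₂ = 1)

/-- The Italian domination number: minimum weight of an Italian dominating function. -/
noncomputable def italianDomNum (V : Type*) [Fintype V] (adj : V → V → Prop) : ℕ :=
  sInf {w : ℕ | ∃ f : V → ℕ, IsIDF adj f ∧ ∑ v, f v = w}

/-- The directed cycle on `n` vertices: arc `i → i+1 (mod n)`. -/
def cycleAdj (n : ℕ) (i j : Fin n) : Prop := (j : ℕ) = ((i : ℕ) + 1) % n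

/-- Cartesian product of digraphs. -/
def cartAdj {α β : Type*} (A : α → α → Prop) (B : β → β → Prop) (x y : α × β) : Prop :=
  (x.1 = y.1 ∧ B x.2 y.2) ∨ (A x.1 y.1 ∧ x.2 = y.2)

/-- Strong product of digraphs. -/
def strongAdj {α β : Type*} (A : α → α → Prop) (B : β → β → Prop) (x y : α × β) : Prop :=
  (A x.1 y.1 ∧ B x.2 y.2) ∨ (x.1 = y.1 ∧ B x.2 y.2) ∨ (A x.1 y.1 ∧ x.2 = y.2)

/-- Maximum out-degree of a finite digraph. -/
noncomputable def maxOutDeg (V : Type*) [Fintype V] (adj : V → V → Prop) : ℕ :=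
  Finset.univ.sup fun v => Nat.card {w | adj v w}

/-- Maximum in-degree of a finite digraph. -/
noncomputable def maxInDeg (V : Type*) [Fintype V] (adj : V → V → Prop) : ℕ :=
  Finset.univ.sup fun v => Nat.card {w | adj w v}

/-!
Let `f` be an Italian dominating function and `V₀` the set of vertices with `f = 0`. Every
vertex of `V₀` collects weight at least `2` from its in-neighbours, while every vertex `u` sends
its weight `f u` to at most `Δ⁺` out-neighbours; double counting gives `2 |V₀| ≤ Δ⁺ ω(f)`.
Together with `n - |V₀| ≤ ω(f)` this yields `2n ≤ (2 + Δ⁺) ω(f)`.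
-/

open Finset

section Digraph

variable {V : Type*} [Fintype V] (adj : V → V → Prop) [DecidableRel adj]

lemma card_filter_adj_le_maxOutDeg (u : V) : #{v | adj u v} ≤ maxOutDeg V adj := by
  have hcard : Nat.card {v | adj u v} = #{v | adj u v} := by
    rw [Nat.card_eq_fintype_card, Fintype.card_subtype]; rfl
  exact hcard ▸ le_sup (f := fun v => Nat.card {w | adj v w}) (mem_univ u)

lemma sum_sum_inNeighbors_le (s : Finset V) (f : V → ℕ) :
    ∑ v ∈ s, ∑ u with adj u v, f u ≤ maxOutDeg V adj * ∑ u, f u := by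
  calc ∑ v ∈ s, ∑ u with adj u v, f u
      = ∑ u, #{v ∈ s | adj u v} * f u := by
        simp_rw [sum_filter]
        rw [sum_comm]
        refine sum_congr rfl fun u _ => ?_
        rw [← sum_filter, sum_const, smul_eq_mul]
    _ ≤ ∑ u, maxOutDeg V adj * f u := by
        gcongr with u
        exact (card_le_card (filter_subset_filter _ (subset_univ s))).trans
          (card_filter_adj_le_maxOutDeg adj u)
    _ = maxOutDeg V adj * ∑ u, f u := (mul_sum _ _ _).symm

end Digraph

lemma card_le_card_filter_eq_zero_add_sum {V : Type*} [Fintype V] (f : V → ℕ) :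
    Fintype.card V ≤ #{v | f v = 0} + ∑ v, f v :=
  calc Fintype.card V = ∑ _v : V, 1 := (card_eq_sum_ones _)
    _ ≤ ∑ v, ((if f v = 0 then 1 else 0) + f v) :=
      sum_le_sum fun v _ => by split_ifs <;> omega
    _ = #{v | f v = 0} + ∑ v, f v := by rw [sum_add_distrib, sum_boole, Nat.cast_id]

namespace IsIDF

variable {V : Type*} {adj : V → V → Prop} {f : V → ℕ}

lemma two_le_sum_inNeighbors [Fintype V] [DecidableRel adj] (hf : IsIDF adj f) {v : V}
    (hv : f v = 0) : 2 ≤ ∑ u with adj u v, f u := by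
  classical
  rcases hf.2 v hv with ⟨u, hu, hu2⟩ | ⟨u₁, u₂, hne, h₁, h₂, hf₁, hf₂⟩
  · exact hu2 ▸ single_le_sum (fun _ _ => Nat.zero_le _) (by simpa using hu)
  · calc 2 = ∑ u ∈ {u₁, u₂}, f u := by rw [sum_pair hne, hf₁, hf₂]
      _ ≤ ∑ u with adj u v, f u :=
        sum_le_sum_of_subset (by simp [insert_subset_iff, h₁, h₂])

lemma two_mul_card_le [Fintype V] (hf : IsIDF adj f) :
    2 * Fintype.card V ≤ (2 + maxOutDeg V adj) * ∑ v, f v := by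
  classical
  have hzeros : 2 * #{v | f v = 0} ≤ maxOutDeg V adj * ∑ v, f v :=
    calc 2 * #{v | f v = 0} = ∑ v with f v = 0, 2 := by rw [sum_const, smul_eq_mul, mul_comm]
      _ ≤ ∑ v with f v = 0, ∑ u with adj u v, f u :=
        sum_le_sum fun v hv => hf.two_le_sum_inNeighbors (mem_filter.1 hv).2
      _ ≤ maxOutDeg V adj * ∑ v, f v := sum_sum_inNeighbors_le adj _ f
  have hn := card_le_card_filter_eq_zero_add_sum f
  linarith

end IsIDF

lemma exists_isIDF_sum_eq_italianDomNum {V : Type*} [Fintype V] (adj : V → V → Prop) :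
    ∃ f : V → ℕ, IsIDF adj f ∧ ∑ v, f v = italianDomNum V adj :=
  Nat.sInf_mem (s := {w | ∃ f : V → ℕ, IsIDF adj f ∧ ∑ v, f v = w})
    ⟨_, fun _ => 2, ⟨fun _ => le_rfl, fun _ h => absurd h two_ne_zero⟩, rfl⟩

theorem stmt0_general {V : Type*} [Fintype V] (adj : V → V → Prop) :
    italianDomNum V adj ≥
      (2 * Fintype.card V + maxOutDeg V adj + 1) / (2 + maxOutDeg V adj) := by
  obtain ⟨f, hf, hsum⟩ := exists_isIDF_sum_eq_italianDomNum adj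
  have hbound := hf.two_mul_card_le
  rw [hsum] at hbound
  exact Nat.lt_succ_iff.mp ((Nat.div_lt_iff_lt_mul (by omega)).2 (by linarith))

theorem stmt0 {V : Type*} [Fintype V] (adj : V → V → Prop)
    (hsimple : ∀ v, ¬ adj v v) :
    italianDomNum V adj ≥
      (2 * Fintype.card V + maxOutDeg V adj + 1) / (2 + maxOutDeg V adj) :=
  stmt0_general adj
end

section
/- For any finite simple digraph D of order n, γ_I(D) ≤ n, and moreover γ_I(D) = n if and only if both the maximum out-degree Δ⁺(D) and the maximum in-degree Δ⁻(D) are at most 1. -/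
/-!
The constant function `1` is an Italian dominating function, so `γ_I(D) ≤ n`.
If some vertex `v` has two out-neighbours `a, b`, then `2` on `v`, `0` on `a, b` and `1`
elsewhere is one of weight `n - 1`; if `v` has two in-neighbours, then `0` on `v` and `1`
elsewhere is one of weight `n - 1`. Conversely, when all in- and out-degrees are at most `1`,
a vertex of value `0` can only be dominated by its unique in-neighbour, which must carry `2`,
and distinct vertices of value `0` have distinct in-neighbours. So there are at least as many
`2`s as `0`s, and every Italian dominating function has weight at least `n`.
-/

open Finset

theorem isIDF_one {V : Type*} (adj : V → V → Prop) : IsIDF adj fun _ => 1 :=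
  ⟨fun _ => by norm_num, fun _ h => absurd h one_ne_zero⟩

section ItalianDomination

variable {V : Type*} [Fintype V] {adj : V → V → Prop}

theorem italianDomNum_le_sum {f : V → ℕ} (hf : IsIDF adj f) :
    italianDomNum V adj ≤ ∑ v, f v :=
  Nat.sInf_le ⟨f, hf, rfl⟩

theorem le_italianDomNum {n : ℕ} (h : ∀ f, IsIDF adj f → n ≤ ∑ v, f v) :
    n ≤ italianDomNum V adj :=
  le_csInf ⟨_, _, isIDF_one adj, rfl⟩ (by rintro _ ⟨f, hf, rfl⟩; exact h f hf)

variable (adj) in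
theorem italianDomNum_le_card : italianDomNum V adj ≤ Fintype.card V := by
  simpa using italianDomNum_le_sum (isIDF_one adj)

theorem maxOutDeg_le_one_iff :
    maxOutDeg V adj ≤ 1 ↔ ∀ v w₁ w₂, adj v w₁ → adj v w₂ → w₁ = w₂ := by
  simp only [maxOutDeg, Finset.sup_le_iff, mem_univ, true_implies, Nat.card_coe_set_eq]
  exact forall_congr' fun v =>
    (Set.ncard_le_one_iff (Set.toFinite _)).trans ⟨fun h _ _ => h, fun h _ _ => h _ _⟩

theorem maxInDeg_le_one_iff :
    maxInDeg V adj ≤ 1 ↔ ∀ v w₁ w₂, adj w₁ v → adj w₂ v → w₁ = w₂ :=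
  maxOutDeg_le_one_iff (adj := flip adj)

theorem italianDomNum_lt_card_of_two_out_neighbors (hsimple : ∀ v, ¬ adj v v) {v a b : V}
    (ha : adj v a) (hb : adj v b) (hab : a ≠ b) : italianDomNum V adj < Fintype.card V := by
  classical
  have hav : a ≠ v := fun h => hsimple v (h ▸ ha)
  have hbv : b ≠ v := fun h => hsimple v (h ▸ hb)
  let f : V → ℕ := fun u => if u = v then 2 else if u = a ∨ u = b then 0 else 1
  have hf : IsIDF adj f := by
    refine ⟨fun u => by dsimp only [f]; split_ifs <;> omega,
      fun u hu => Or.inl ⟨v, ?_, if_pos rfl⟩⟩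
    dsimp only [f] at hu
    split_ifs at hu with _ hu'
    rcases hu' with rfl | rfl <;> assumption
  have hweight : ∀ u, f u + (if u = a then 1 else 0) + (if u = b then 1 else 0)
      = 1 + (if u = v then 1 else 0) := by
    intro u
    dsimp only [f]
    split_ifs <;> simp_all
  have hsum := congrArg (fun g : V → ℕ => ∑ u, g u) (funext hweight)
  simp only [sum_add_distrib, sum_ite_eq', mem_univ, if_true, sum_const, card_univ,
    smul_eq_mul, mul_one] at hsum
  have := italianDomNum_le_sum hf
  omega

theorem italianDomNum_lt_card_of_two_in_neighbors (hsimple : ∀ v, ¬ adj v v) {v a b : V}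
    (ha : adj a v) (hb : adj b v) (hab : a ≠ b) : italianDomNum V adj < Fintype.card V := by
  classical
  have hav : a ≠ v := fun h => hsimple v (h ▸ ha)
  have hbv : b ≠ v := fun h => hsimple v (h ▸ hb)
  let f : V → ℕ := fun u => if u = v then 0 else 1
  have hf : IsIDF adj f := by
    refine ⟨fun u => by dsimp only [f]; split_ifs <;> omega, fun u hu => ?_⟩
    have huv : u = v := by by_contra h; simp [f, h] at hu
    subst huv
    exact Or.inr ⟨a, b, hab, ha, hb, if_neg hav, if_neg hbv⟩
  have hweight : ∀ u, f u + (if u = v then 1 else 0) = 1 := by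
    intro u
    dsimp only [f]
    split_ifs <;> rfl
  have hsum := congrArg (fun g : V → ℕ => ∑ u, g u) (funext hweight)
  simp only [sum_add_distrib, sum_ite_eq', mem_univ, if_true, sum_const, card_univ,
    smul_eq_mul, mul_one] at hsum
  have := italianDomNum_le_sum hf
  omega

theorem card_le_sum_of_isIDF (hout : ∀ v w₁ w₂, adj v w₁ → adj v w₂ → w₁ = w₂)
    (hin : ∀ v w₁ w₂, adj w₁ v → adj w₂ v → w₁ = w₂) {f : V → ℕ} (hf : IsIDF adj f) :
    Fintype.card V ≤ ∑ v, f v := by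
  classical
  obtain ⟨hf2, hf0⟩ := hf
  have hzeros : #{v | f v = 0} ≤ #{v | f v = 2} := by
    refine card_le_card_of_forall_subsingleton (fun v w => adj w v) (fun v hv => ?_)
      (fun w _ v₁ h₁ v₂ h₂ => hout w v₁ v₂ h₁.2 h₂.2)
    rcases hf0 v (mem_filter.1 hv).2 with ⟨w, hw, hw2⟩ | ⟨w₁, w₂, hne, h₁, h₂, -⟩
    · exact ⟨w, mem_filter.2 ⟨mem_univ w, hw2⟩, hw⟩
    · exact (hne (hin v w₁ w₂ h₁ h₂)).elim
  -- summed over `V`, this reads `∑ f + #zeros = n + #twos`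
  have hweight : ∀ v, f v + (if f v = 0 then 1 else 0) = 1 + (if f v = 2 then 1 else 0) := by
    intro v
    have := hf2 v
    split_ifs <;> omega
  have hsum := congrArg (fun g : V → ℕ => ∑ v, g v) (funext hweight)
  simp only [sum_add_distrib, ← card_filter, sum_const, card_univ, smul_eq_mul,
    mul_one] at hsum
  omega

end ItalianDomination

theorem stmt1 {V : Type*} [Fintype V] (adj : V → V → Prop)
    (hsimple : ∀ v, ¬ adj v v) :
    italianDomNum V adj ≤ Fintype.card V ∧
    (italianDomNum V adj = Fintype.card V ↔
      maxOutDeg V adj ≤ 1 ∧ maxInDeg V adj ≤ 1) := by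
  refine ⟨italianDomNum_le_card adj, ⟨fun heq => ?_, fun ⟨hout, hin⟩ => ?_⟩⟩
  · rw [maxOutDeg_le_one_iff, maxInDeg_le_one_iff]
    refine ⟨fun v a b ha hb => ?_, fun v a b ha hb => ?_⟩ <;> by_contra hab
    · exact (italianDomNum_lt_card_of_two_out_neighbors hsimple ha hb hab).ne heq
    · exact (italianDomNum_lt_card_of_two_in_neighbors hsimple ha hb hab).ne heq
  · rw [maxOutDeg_le_one_iff] at hout
    rw [maxInDeg_le_one_iff] at hin
    exact (italianDomNum_le_card adj).antisymm
      (le_italianDomNum fun f hf => card_le_sum_of_isIDF hout hin hf)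
end

section
/- If m = 2r and n = 2s for positive integers r, s, then the Italian domination number of the cartesian product of directed cycles satisfies γ_I(C_m □ C_n) = mn/2. -/
/-!
The lower bound is a discharging argument. In `C_m □ C_n` every vertex `v` has exactly the two
in-neighbours `(v₁ - 1, v₂)` and `(v₁, v₂ - 1)`, and for an Italian dominating function `f`
each vertex satisfies `2 f(v) + f(v₁ - 1, v₂) + f(v₁, v₂ - 1) ≥ 2`. Summing over all vertices,
each value of `f` is counted four times, so `4 w(f) ≥ 2mn`. For even `m` and `n` the
checkerboard colouring (value `1` where `v₁ + v₂` is even) attains `mn/2`: both in-neighbours of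
an odd vertex are even.
-/

open Finset

section Domination

variable {V : Type*} {adj : V → V → Prop}

theorem italianDomNum_eq_of_isIDF [Fintype V] {f : V → ℕ} (hf : IsIDF adj f)
    (hmin : ∀ g, IsIDF adj g → ∑ v, f v ≤ ∑ v, g v) :
    italianDomNum V adj = ∑ v, f v :=
  le_antisymm (Nat.sInf_le ⟨f, hf, rfl⟩)
    (le_csInf ⟨_, f, hf, rfl⟩ (by rintro _ ⟨g, hg, rfl⟩; exact hmin g hg))

theorem IsIDF.two_le {p q : V → V} (hadj : ∀ w v, adj w v ↔ w = p v ∨ w = q v) {f : V → ℕ}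
    (hf : IsIDF adj f) (v : V) :
    2 ≤ 2 * f v + f (p v) + f (q v) := by
  obtain ⟨-, hzero⟩ := hf
  rcases Nat.eq_zero_or_pos (f v) with hv | hv
  · rcases hzero v hv with ⟨w, hw, hw2⟩ | ⟨w₁, w₂, hne, hw₁, hw₂, hf₁, hf₂⟩
    · rcases (hadj w v).1 hw with rfl | rfl <;> omega
    · rcases (hadj w₁ v).1 hw₁ with rfl | rfl <;> rcases (hadj w₂ v).1 hw₂ with rfl | rfl <;>
        first | exact absurd rfl hne | omega
  · omega

theorem IsIDF.card_le_two_mul_sum [Fintype V] (p q : Equiv.Perm V)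
    (hadj : ∀ w v, adj w v ↔ w = p v ∨ w = q v) {f : V → ℕ} (hf : IsIDF adj f) :
    Fintype.card V ≤ 2 * ∑ v, f v := by
  have hsum : ∑ _v : V, 2 ≤ ∑ v, (2 * f v + f (p v) + f (q v)) :=
    sum_le_sum fun v _ => hf.two_le hadj v
  rw [sum_const, card_univ, sum_add_distrib, sum_add_distrib, ← mul_sum,
    Equiv.sum_comp p f, Equiv.sum_comp q f, smul_eq_mul] at hsum
  omega

end Domination

theorem two_mul_sum_eq_card_of_add_comp_eq_one {V : Type*} [Fintype V] (σ : Equiv.Perm V)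
    {f : V → ℕ} (h : ∀ v, f v + f (σ v) = 1) : 2 * ∑ v, f v = Fintype.card V := by
  calc 2 * ∑ v, f v = ∑ v, f v + ∑ v, f (σ v) := by rw [Equiv.sum_comp σ f, two_mul]
    _ = ∑ v, (f v + f (σ v)) := sum_add_distrib.symm
    _ = Fintype.card V := by simp only [h, sum_const, card_univ, smul_eq_mul, mul_one]

namespace Fin

variable {m : ℕ} [NeZero m]

theorem even_val_add_one_iff (hm : Even m) (x : Fin m) :
    Even ((x + 1 : Fin m) : ℕ) ↔ ¬Even (x : ℕ) := by
  rw [Fin.val_add, Fin.val_one', Nat.add_mod_mod]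
  have hx : (x : ℕ) + 1 ≤ m := x.isLt
  rcases Nat.lt_or_eq_of_le hx with h | h
  · rw [Nat.mod_eq_of_lt h, Nat.even_add_one]
  · rw [h, Nat.mod_self]
    rw [← h, Nat.even_add_one] at hm
    simpa using hm

theorem even_val_sub_one_iff (hm : Even m) (x : Fin m) :
    Even ((x - 1 : Fin m) : ℕ) ↔ ¬Even (x : ℕ) := by
  have h := even_val_add_one_iff hm (x - 1)
  rw [sub_add_cancel] at h
  tauto

end Fin

theorem cycleAdj_iff {n : ℕ} [NeZero n] {i j : Fin n} : cycleAdj n i j ↔ i + 1 = j := by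
  rw [cycleAdj, eq_comm, Fin.ext_iff, Fin.val_add, Fin.val_one', Nat.add_mod_mod]

section CycleProduct

variable {m n : ℕ}

theorem cartAdj_cycleAdj_iff [NeZero m] [NeZero n] {w v : Fin m × Fin n} :
    cartAdj (cycleAdj m) (cycleAdj n) w v ↔ w = (v.1, v.2 - 1) ∨ w = (v.1 - 1, v.2) := by
  simp only [cartAdj, cycleAdj_iff, Prod.ext_iff, eq_sub_iff_add_eq]

def checkerboard (v : Fin m × Fin n) : ℕ := if Even ((v.1 : ℕ) + v.2) then 1 else 0

theorem checkerboard_add_checkerboard_succ [NeZero n] (hn : Even n) (v : Fin m × Fin n) :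
    checkerboard v + checkerboard (v.1, v.2 + 1) = 1 := by
  have h := Fin.even_val_add_one_iff hn v.2
  unfold checkerboard
  split_ifs with h₁ h₂ h₂ <;> simp only [Nat.even_add] at h₁ h₂ <;> tauto

theorem isIDF_checkerboard [NeZero m] [NeZero n] (hm : Even m) (hn : Even n) :
    IsIDF (cartAdj (cycleAdj m) (cycleAdj n)) checkerboard := by
  refine ⟨fun v => by unfold checkerboard; split_ifs <;> omega, fun v hv => Or.inr ?_⟩
  have hodd : ¬Even ((v.1 : ℕ) + v.2) := by unfold checkerboard at hv; split_ifs at hv; assumption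
  have h₁ := Fin.even_val_sub_one_iff hm v.1
  have h₂ := Fin.even_val_sub_one_iff hn v.2
  rw [Nat.even_add] at hodd
  refine ⟨(v.1 - 1, v.2), (v.1, v.2 - 1), fun h => ?_, cartAdj_cycleAdj_iff.2 (Or.inr rfl),
    cartAdj_cycleAdj_iff.2 (Or.inl rfl), ?_, ?_⟩
  · rw [(Prod.mk.inj h).1] at h₁
    tauto
  all_goals
    unfold checkerboard
    rw [if_pos (Nat.even_add.2 (by tauto))]

end CycleProduct

theorem stmt4 (r s m n : ℕ) (hr : 1 ≤ r) (hs : 1 ≤ s) (hm : m = 2 * r) (hn : n = 2 * s) :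
    italianDomNum (Fin m × Fin n) (cartAdj (cycleAdj m) (cycleAdj n)) = m * n / 2 := by
  have : NeZero m := ⟨by omega⟩
  have : NeZero n := ⟨by omega⟩
  have hm_even : Even m := hm ▸ even_two_mul r
  have hn_even : Even n := hn ▸ even_two_mul s
  have hcard : Fintype.card (Fin m × Fin n) = m * n := by simp
  have hweight : 2 * ∑ v, checkerboard v = m * n :=
    hcard ▸ two_mul_sum_eq_card_of_add_comp_eq_one
      (Equiv.prodCongr (Equiv.refl _) (Equiv.addRight 1))
      (checkerboard_add_checkerboard_succ hn_even)
  rw [italianDomNum_eq_of_isIDF (isIDF_checkerboard hm_even hn_even)]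
  · omega
  · intro g hg
    have := hg.card_le_two_mul_sum (Equiv.prodCongr (Equiv.refl _) (Equiv.subRight 1))
      (Equiv.prodCongr (Equiv.subRight 1) (Equiv.refl _)) fun _ _ => cartAdj_cycleAdj_iff
    omega
end

section
/- For every integer n ≥ 3 divisible by 3, the function f₀ on V(C₃ □ C_n) defined by f₀((1,3j+1)) = f₀((2,3j+1)) = 1, f₀((2,3j+2)) = f₀((3,3j+2)) = 1, f₀((1,3j+3)) = f₀((3,3j+3)) = 1 for each 0 ≤ j ≤ n/3 − 1, and f₀ = 0 otherwise, is an Italian dominating function of C₃ □ C_n of weight 2n. -/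
/-!
Call `(a, b)` diagonal when `a + 1 ≡ b (mod k)`. The in-neighbours `(a - 1, b)` and `(a, b - 1)`
of a diagonal vertex are off the diagonal, since stepping along either cycle shifts `b - a` by one
modulo `k` (for the `C_n` coordinate this needs `k ∣ n`). Hence for `k ≥ 2` and `k ∣ n` the
indicator of the off-diagonal vertices is an Italian dominating function of `C_k □ C_n`; every
column meets the diagonal exactly once, so its weight is `(k - 1) n`. For `k = 3` it is `f₀`.
-/

theorem cycleAdj.modEq {k n : ℕ} (hkn : k ∣ n) {i j : Fin n} (h : cycleAdj n i j) :
    (i : ℕ) + 1 ≡ j [MOD k] := by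
  rw [cycleAdj] at h
  exact h ▸ (Nat.mod_modEq _ n).symm.of_dvd hkn

theorem exists_cycleAdj {n : ℕ} (j : Fin n) : ∃ i, cycleAdj n i j := by
  have hj := j.isLt
  refine ⟨⟨(j + n - 1) % n, Nat.mod_lt _ (by omega)⟩, ?_⟩
  rw [cycleAdj, Nat.mod_add_mod, show (j : ℕ) + n - 1 + 1 = j + n by omega, Nat.add_mod_right,
    Nat.mod_eq_of_lt hj]

theorem Nat.not_succ_modEq_self {k : ℕ} (hk : 2 ≤ k) (m : ℕ) : ¬ m + 1 ≡ m [MOD k] := by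
  intro h
  have hk1 : k ∣ 1 := Nat.modEq_zero_iff_dvd.mp (Nat.ModEq.add_left_cancel' m h)
  have := Nat.dvd_one.mp hk1
  omega

theorem cycleAdj_irrefl {k : ℕ} (hk : 2 ≤ k) (i : Fin k) : ¬ cycleAdj k i i :=
  fun h => Nat.not_succ_modEq_self hk i (cycleAdj.modEq dvd_rfl h)

open Finset

def offDiagonalIndicator (k n : ℕ) (p : Fin k × Fin n) : ℕ :=
  if (p.1 : ℕ) + 1 ≡ p.2 [MOD k] then 0 else 1

theorem isIDF_offDiagonalIndicator {k n : ℕ} (hk : 2 ≤ k) (hkn : k ∣ n) :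
    IsIDF (cartAdj (cycleAdj k) (cycleAdj n)) (offDiagonalIndicator k n) := by
  refine ⟨fun p => by unfold offDiagonalIndicator; split_ifs <;> omega, ?_⟩
  rintro ⟨a, b⟩ hab
  have hdiag : (a : ℕ) + 1 ≡ b [MOD k] := by
    by_contra h
    simp [offDiagonalIndicator, h] at hab
  obtain ⟨a', ha'⟩ := exists_cycleAdj a
  obtain ⟨b', hb'⟩ := exists_cycleAdj b
  refine Or.inr ⟨(a', b), (a, b'), ?_, Or.inr ⟨ha', rfl⟩, Or.inl ⟨rfl, hb'⟩, ?_, ?_⟩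
  · intro h
    obtain rfl : a' = a := congrArg Prod.fst h
    exact cycleAdj_irrefl hk a' ha'
  · rw [offDiagonalIndicator, if_neg]
    intro h
    exact Nat.not_succ_modEq_self hk a (hdiag.trans (h.symm.trans (cycleAdj.modEq dvd_rfl ha')))
  · rw [offDiagonalIndicator, if_neg]
    intro h
    exact Nat.not_succ_modEq_self hk _ ((Nat.ModEq.add_right 1 h).trans
      ((cycleAdj.modEq hkn hb').trans hdiag.symm))

theorem card_filter_succ_modEq {k : ℕ} (hk : 0 < k) (b : ℕ) :
    #{a : Fin k | (a : ℕ) + 1 ≡ b [MOD k]} = 1 := by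
  rw [card_eq_one]
  refine ⟨⟨(b + k - 1) % k, Nat.mod_lt _ hk⟩, ?_⟩
  ext a
  have hpred : (a : ℕ) + 1 ≡ b [MOD k] ↔ (a : ℕ) ≡ b + k - 1 [MOD k] := by
    rw [← Nat.modEq_add_modulus_iff (b := b), show b + k = b + k - 1 + 1 by omega]
    exact ⟨Nat.ModEq.add_right_cancel' 1, Nat.ModEq.add_right 1⟩
  rw [mem_filter_univ, hpred, mem_singleton, Fin.ext_iff, Nat.ModEq, Nat.mod_eq_of_lt a.isLt]

theorem sum_offDiagonalIndicator {k : ℕ} (hk : 0 < k) (n : ℕ) :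
    ∑ p, offDiagonalIndicator k n p = (k - 1) * n := by
  rw [Fintype.sum_prod_type_right]
  have hcol : ∀ b : Fin n, ∑ a : Fin k, offDiagonalIndicator k n (a, b) = k - 1 := by
    intro b
    simp only [offDiagonalIndicator]
    rw [sum_ite, sum_const_zero, sum_const, smul_eq_mul, mul_one, zero_add,
      filter_not, card_sdiff, inter_univ, card_filter_succ_modEq hk, card_univ, Fintype.card_fin]
  simp [hcol, mul_comm]

theorem three_pattern_eq_offDiagonalIndicator {n : ℕ} (p : Fin 3 × Fin n) :
    (if ((p.2 : ℕ) % 3 = 0 ∧ ((p.1 : ℕ) = 0 ∨ (p.1 : ℕ) = 1)) ∨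
        ((p.2 : ℕ) % 3 = 1 ∧ ((p.1 : ℕ) = 1 ∨ (p.1 : ℕ) = 2)) ∨
        ((p.2 : ℕ) % 3 = 2 ∧ ((p.1 : ℕ) = 0 ∨ (p.1 : ℕ) = 2)) then 1 else 0) =
      offDiagonalIndicator 3 n p := by
  have := p.1.isLt
  rw [offDiagonalIndicator]
  split_ifs <;> simp_all only [Nat.ModEq] <;> omega

theorem stmt10_general (n : ℕ) (hdvd : 3 ∣ n) :
    IsIDF (cartAdj (cycleAdj 3) (cycleAdj n))
      (fun p : Fin 3 × Fin n =>
        if ((p.2 : ℕ) % 3 = 0 ∧ ((p.1 : ℕ) = 0 ∨ (p.1 : ℕ) = 1)) ∨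
           ((p.2 : ℕ) % 3 = 1 ∧ ((p.1 : ℕ) = 1 ∨ (p.1 : ℕ) = 2)) ∨
           ((p.2 : ℕ) % 3 = 2 ∧ ((p.1 : ℕ) = 0 ∨ (p.1 : ℕ) = 2)) then 1 else 0) ∧
    (∑ p : Fin 3 × Fin n,
        if ((p.2 : ℕ) % 3 = 0 ∧ ((p.1 : ℕ) = 0 ∨ (p.1 : ℕ) = 1)) ∨
           ((p.2 : ℕ) % 3 = 1 ∧ ((p.1 : ℕ) = 1 ∨ (p.1 : ℕ) = 2)) ∨
           ((p.2 : ℕ) % 3 = 2 ∧ ((p.1 : ℕ) = 0 ∨ (p.1 : ℕ) = 2)) then 1 else 0) = 2 * n := by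
  simp only [three_pattern_eq_offDiagonalIndicator]
  exact ⟨isIDF_offDiagonalIndicator (by norm_num) hdvd, sum_offDiagonalIndicator three_pos n⟩

theorem stmt10 (n : ℕ) (hn : 3 ≤ n) (hdvd : 3 ∣ n) :
    IsIDF (cartAdj (cycleAdj 3) (cycleAdj n))
      (fun p : Fin 3 × Fin n =>
        if ((p.2 : ℕ) % 3 = 0 ∧ ((p.1 : ℕ) = 0 ∨ (p.1 : ℕ) = 1)) ∨
           ((p.2 : ℕ) % 3 = 1 ∧ ((p.1 : ℕ) = 1 ∨ (p.1 : ℕ) = 2)) ∨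
           ((p.2 : ℕ) % 3 = 2 ∧ ((p.1 : ℕ) = 0 ∨ (p.1 : ℕ) = 2)) then 1 else 0) ∧
    (∑ p : Fin 3 × Fin n,
        if ((p.2 : ℕ) % 3 = 0 ∧ ((p.1 : ℕ) = 0 ∨ (p.1 : ℕ) = 1)) ∨
           ((p.2 : ℕ) % 3 = 1 ∧ ((p.1 : ℕ) = 1 ∨ (p.1 : ℕ) = 2)) ∨
           ((p.2 : ℕ) % 3 = 2 ∧ ((p.1 : ℕ) = 0 ∨ (p.1 : ℕ) = 2)) then 1 else 0) = 2 * n :=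
  stmt10_general n hdvd
end

section
/- For integers m ≥ 2 and even n = 2s ≥ 2, the function f on V(C_m ⊗ C_n) defined by f((i, 2j−1)) = 1 for all 1 ≤ i ≤ m and 1 ≤ j ≤ s, and f = 0 otherwise, is an Italian dominating function of C_m ⊗ C_n of weight mn/2. -/
/-!
Put `1` on the layers `Fin m × {j}` with `j` even (indices are 0-based, so these are the paper's
layers `2j − 1`). A vertex `(i, j)` of weight `0` has `j` odd, and its two in-neighbours
`(i - 1, j - 1)` and `(i, j - 1)` lie on an even layer; they are distinct because `C_m` has no
loops once `m ≥ 2`. Half of the `n = 2s` layers are even, so the weight is `m s = mn / 2`.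
-/

theorem isIDF_strongAdj_of_snd {α β : Type*} {A : α → α → Prop} {B : β → β → Prop} {g : β → ℕ}
    (hg : ∀ b, g b ≤ 2) (hA : ∀ a, ∃ a', a' ≠ a ∧ A a' a)
    (hB : ∀ b, g b = 0 → ∃ b', B b' b ∧ g b' = 1) :
    IsIDF (strongAdj A B) (fun p : α × β => g p.2) := by
  refine ⟨fun p => hg p.2, fun ⟨a, b⟩ hb => Or.inr ?_⟩
  obtain ⟨a', ha', hAa⟩ := hA a
  obtain ⟨b', hBb, hgb'⟩ := hB b hb
  exact ⟨(a', b'), (a, b'), fun h => ha' (congrArg Prod.fst h),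
    Or.inl ⟨hAa, hBb⟩, Or.inr (Or.inl ⟨rfl, hBb⟩), hgb', hgb'⟩

theorem cycleAdj_iff_eq_add_one {n : ℕ} [NeZero n] {i j : Fin n} :
    cycleAdj n i j ↔ j = i + 1 := by
  rw [cycleAdj, Fin.ext_iff, Fin.val_add, Fin.val_one', Nat.add_mod_mod]

theorem cycleAdj_sub_one {n : ℕ} [NeZero n] (i : Fin n) : cycleAdj n (i - 1) i :=
  cycleAdj_iff_eq_add_one.2 (sub_add_cancel i 1).symm

theorem exists_cycleAdj_ne {m : ℕ} (hm : 2 ≤ m) (i : Fin m) : ∃ i', i' ≠ i ∧ cycleAdj m i' i := by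
  obtain ⟨k, rfl⟩ : ∃ k, m = k + 2 := ⟨m - 2, by omega⟩
  exact ⟨i - 1, by simp, cycleAdj_sub_one i⟩

theorem exists_cycleAdj_even_of_odd {n : ℕ} {j : Fin n} (hj : (j : ℕ) % 2 = 1) :
    ∃ j', cycleAdj n j' j ∧ (j' : ℕ) % 2 = 0 := by
  have := j.neZero
  have hj0 : j ≠ 0 := by rintro rfl; simp at hj
  exact ⟨j - 1, cycleAdj_sub_one j, by rw [Fin.val_sub_one_of_ne_zero hj0]; omega⟩

theorem Fintype.sum_comp_snd {α β M : Type*} [Fintype α] [Fintype β] [AddCommMonoid M]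
    (g : β → M) : ∑ p : α × β, g p.2 = Fintype.card α • ∑ b, g b := by
  simp only [Fintype.sum_prod_type, Finset.sum_const, Finset.card_univ]

theorem sum_range_two_mul_ite_even (s : ℕ) :
    (∑ j ∈ Finset.range (2 * s), if j % 2 = 0 then 1 else 0) = s := by
  induction s with
  | zero => simp
  | succ s ih =>
    rw [Nat.mul_succ, Finset.sum_range_succ, Finset.sum_range_succ, ih]
    simp [Nat.add_mod]

theorem stmt15_general (m s n : ℕ) (hm : 2 ≤ m) (hn : n = 2 * s) :
    IsIDF (strongAdj (cycleAdj m) (cycleAdj n))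
      (fun p : Fin m × Fin n => if (p.2 : ℕ) % 2 = 0 then 1 else 0) ∧
    (∑ p : Fin m × Fin n, if (p.2 : ℕ) % 2 = 0 then 1 else 0) = m * n / 2 := by
  constructor
  · refine isIDF_strongAdj_of_snd (g := fun j : Fin n => if (j : ℕ) % 2 = 0 then 1 else 0)
      (fun _ => by split <;> omega) (exists_cycleAdj_ne hm) fun j hj => ?_
    obtain ⟨j', hadj, heven⟩ := exists_cycleAdj_even_of_odd (j := j) (by split_ifs at hj; omega)
    exact ⟨j', hadj, if_pos heven⟩
  · rw [Fintype.sum_comp_snd (fun j : Fin n => if (j : ℕ) % 2 = 0 then 1 else 0), Fintype.card_fin,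
      smul_eq_mul, Fin.sum_univ_eq_sum_range (fun j => if j % 2 = 0 then 1 else 0), hn,
      sum_range_two_mul_ite_even, mul_left_comm, Nat.mul_div_cancel_left _ two_pos]

theorem stmt15 (m s n : ℕ) (hm : 2 ≤ m) (hs : 1 ≤ s) (hn : n = 2 * s) :
    IsIDF (strongAdj (cycleAdj m) (cycleAdj n))
      (fun p : Fin m × Fin n => if (p.2 : ℕ) % 2 = 0 then 1 else 0) ∧
    (∑ p : Fin m × Fin n, if (p.2 : ℕ) % 2 = 0 then 1 else 0) = m * n / 2 :=
  stmt15_general m s n hm hn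
end
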